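/- Let n, d ≥ 1 be integers, let α, β > 0 and γ ≠ 0, and let p, q, r satisfy 1 ≤ p ≤ 2 ≤ q ≤ ∞, 1 ≤ r ≤ 2(d+1)/(d+3), and not simultaneously d = 1, p = 2, q = 2. For μ > 0 and each integer k ≥ 0 let μ_k be the unique λ > 0 with ((2k+n)λ)^α + λ^{2β} = μ^{1/γ}. Set E = n(1/p − 1/q) + d(1/r − 1/r′), σ = φ(1/p − 1/2) + φ(1/2 − 1/q), B = E/(αγ) − 1, and A = E/(2βγ) + (1/γ)(1/α − 1/(2β))(σ + 1) − 1. Then there is a constant C (depending on n, d, p, q, r, α, β, γ) such that for every μ > 0: Σ_{k=0}^{∞} μ^{−1} μ_k^{E} (2k+n)^{σ} ≤ C μ^{B} whenever μ^{(1/α − 1/(2β))/γ} ≤ 1, and Σ_{k=0}^{∞} μ^{−1} μ_k^{E} (2k+n)^{σ} ≤ C μ^{A} whenever μ^{(1/α − 1/(2β))/γ} > 1. -/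

import Mathlib

/-!
Put `b = μ^{1/(2βγ)}` and `M = μ^{(1/α − 1/(2β))/γ}`, so that `bM = μ^{1/(αγ)}`. The defining
equation of `μ_k` bounds both summands by `μ^{1/γ}`, whence `μ_k ≤ b` and `(2k+n) μ_k ≤ bM`, so
the `k`-th term is at most `μ⁻¹ b^E min((2k+n)^σ, M^E (2k+n)^{σ−E})`. The hypotheses on
`p, q, r, d` give `σ > −1` and `E − σ > 1`. Keeping only the second entry of the minimum
gives a convergent `p`-series and the bound `μ^B`. When `M > 1`, the first entry is summed over
`2k + n ≤ M` and the second over the rest; each part is `O(M^{σ+1})`, which gives `μ^A`.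
-/

open scoped ENNReal

/-- The piecewise-linear exponent function `φ` of Koch–Ricci:
`φ(s) = −s/2` for `s ≤ s* = 1/(2n+1)` and `φ(s) = ns − 1/2` for `s ≥ s*`. -/
noncomputable def phiKR (n : ℕ) (s : ℝ) : ℝ :=
  if s ≤ 1 / (2 * n + 1) then -s / 2 else n * s - 1 / 2

open Real Finset

theorem phiKR_eq_max (n : ℕ) (s : ℝ) : phiKR n s = max (-s / 2) (n * s - 1 / 2) := by
  have hn : (0 : ℝ) < 2 * n + 1 := by positivity
  unfold phiKR
  split_ifs with h
  · rw [le_div_iff₀ hn] at h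
    exact (max_eq_left (by nlinarith)).symm
  · rw [not_le, div_lt_iff₀ hn] at h
    exact (max_eq_right (by nlinarith)).symm

theorem neg_div_two_le_phiKR (n : ℕ) (s : ℝ) : -s / 2 ≤ phiKR n s :=
  (phiKR_eq_max n s).symm ▸ le_max_left _ _

theorem phiKR_le_mul (n : ℕ) {s : ℝ} (hs : 0 ≤ s) : phiKR n s ≤ n * s := by
  rw [phiKR_eq_max]
  exact max_le (by nlinarith [(Nat.cast_nonneg n : (0 : ℝ) ≤ n)]) (by linarith)

theorem phiKR_lt_mul (n : ℕ) {s : ℝ} (hs : 0 < s) : phiKR n s < n * s := by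
  rw [phiKR_eq_max]
  exact max_lt (by nlinarith [(Nat.cast_nonneg n : (0 : ℝ) ≤ n)]) (by linarith)

theorem toReal_inv_le_half {q : ℝ≥0∞} (hq : 2 ≤ q) : (q⁻¹).toReal ≤ 1 / 2 := by
  simpa using ENNReal.toReal_mono (by simp) (ENNReal.inv_le_inv.2 hq)

theorem toReal_inv_lt_half {q : ℝ≥0∞} (hq : 2 < q) : (q⁻¹).toReal < 1 / 2 := by
  simpa using ENNReal.toReal_strict_mono (by simp) (ENNReal.inv_lt_inv.2 hq)

theorem two_mul_div_le_mul_sub {d r : ℝ} (hd : 0 ≤ d) (hr : 0 < r)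
    (hr2 : r ≤ 2 * (d + 1) / (d + 3)) : 2 * d / (d + 1) ≤ d * (1 / r - (1 - 1 / r)) := by
  have h : (d + 3) / (2 * (d + 1)) ≤ 1 / r := by
    simpa only [one_div_div] using one_div_le_one_div_of_le hr hr2
  calc 2 * d / (d + 1) = d * ((d + 3) / (2 * (d + 1)) * 2 - 1) := by field_simp; ring
    _ ≤ d * (1 / r - (1 - 1 / r)) := mul_le_mul_of_nonneg_left (by linarith) hd

theorem exponent_bounds {n d : ℕ} (hd : 1 ≤ d) {p r : ℝ} {q : ℝ≥0∞} (hp1 : 1 ≤ p) (hp2 : p ≤ 2)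
    (hq : 2 ≤ q) (hr1 : 1 ≤ r) (hr2 : r ≤ 2 * (d + 1) / (d + 3))
    (hne : ¬(d = 1 ∧ p = 2 ∧ q = 2)) :
    -1 < phiKR n (1 / p - 1 / 2) + phiKR n (1 / 2 - (q⁻¹).toReal) ∧
      1 < n * (1 / p - (q⁻¹).toReal) + d * (1 / r - (1 - 1 / r)) -
        (phiKR n (1 / p - 1 / 2) + phiKR n (1 / 2 - (q⁻¹).toReal)) := by
  set s₁ := 1 / p - 1 / 2 with hs₁_def
  set s₂ := 1 / 2 - (q⁻¹).toReal with hs₂_def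
  have hs₁ : 0 ≤ s₁ ∧ s₁ ≤ 1 / 2 := by
    have := one_div_le_one_div_of_le (by linarith) hp2
    have := (div_le_one (by linarith : 0 < p)).2 hp1
    constructor <;> linarith
  have hs₂ : 0 ≤ s₂ ∧ s₂ ≤ 1 / 2 := by
    have := toReal_inv_le_half hq
    have : 0 ≤ (q⁻¹).toReal := ENNReal.toReal_nonneg
    constructor <;> linarith
  have hd' : (1 : ℝ) ≤ d := by exact_mod_cast hd
  have hD := two_mul_div_le_mul_sub (by linarith) (by linarith) hr2
  have hφ₁ := phiKR_le_mul n hs₁.1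
  have hφ₂ := phiKR_le_mul n hs₂.1
  -- for `d = 1` the `r`-part only gives `≥ 1`; `hne` supplies some `sᵢ > 0`, and `φ(sᵢ) < n sᵢ`
  have hgap : 1 < d * (1 / r - (1 - 1 / r)) + (n * s₁ - phiKR n s₁) + (n * s₂ - phiKR n s₂) := by
    rcases hd.eq_or_lt with rfl | hd2
    · by_cases hp : p = 2
      · have hq2 : 2 < q := hq.lt_of_ne fun h => hne ⟨rfl, hp, h.symm⟩
        have := phiKR_lt_mul n (show 0 < s₂ by linarith [toReal_inv_lt_half hq2])
        push_cast at hD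
        linarith
      · have : 1 / 2 < 1 / p := one_div_lt_one_div_of_lt (by linarith) (hp2.lt_of_ne hp)
        have := phiKR_lt_mul n (show 0 < s₁ by linarith)
        push_cast at hD
        linarith
    · have : (1 : ℝ) < 2 * d / (d + 1) := by
        rw [lt_div_iff₀ (by linarith)]
        have : (2 : ℝ) ≤ d := by exact_mod_cast hd2
        linarith
      linarith
  constructor
  · linarith [neg_div_two_le_phiKR n s₁, neg_div_two_le_phiKR n s₂]
  · rw [show 1 / p - (q⁻¹).toReal = s₁ + s₂ by ring]
    linarith

theorem mul_rpow_sub_one_le_rpow_sub_rpow {p x : ℝ} (hp0 : 0 ≤ p) (hp1 : p ≤ 1) (hx : 1 ≤ x) :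
    p * x ^ (p - 1) ≤ x ^ p - (x - 1) ^ p := by
  have hx0 : 0 < x := by linarith
  have hinv : -1 ≤ -x⁻¹ := by linarith [inv_le_one_of_one_le₀ hx]
  have bernoulli := rpow_one_add_le_one_add_mul_self hinv hp0 hp1
  have hsplit : (x - 1) ^ p = x ^ p * (1 + -x⁻¹) ^ p := by
    rw [← mul_rpow hx0.le (by linarith)]
    congr 1
    field_simp
    ring
  rw [hsplit, rpow_sub_one hx0.ne']
  have hxp : 0 ≤ x ^ p := rpow_nonneg hx0.le p
  calc p * (x ^ p / x) = x ^ p - x ^ p * (1 + p * -x⁻¹) := by field_simp; ring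
    _ ≤ x ^ p - x ^ p * (1 + -x⁻¹) ^ p := by gcongr

theorem sum_range_rpow_le {a : ℝ} (ha : -1 < a) (ha0 : a ≤ 0) (N : ℕ) :
    ∑ k ∈ range N, ((k : ℝ) + 1) ^ a ≤ (N : ℝ) ^ (a + 1) / (a + 1) := by
  have ha1 : 0 < a + 1 := by linarith
  induction N with
  | zero => simp [zero_rpow ha1.ne']
  | succ N ih =>
    have step := mul_rpow_sub_one_le_rpow_sub_rpow ha1.le (by linarith)
      (le_add_of_nonneg_left (Nat.cast_nonneg N) : (1 : ℝ) ≤ N + 1)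
    rw [add_sub_cancel_right, add_sub_cancel_right] at step
    rw [sum_range_succ, Nat.cast_succ, le_div_iff₀ ha1]
    rw [le_div_iff₀ ha1] at ih
    linarith

/-- The exponent is lowered to `min σ 0`, where `sum_range_rpow_le` applies, at the cost of the
factor `(k + 1)^(σ - min σ 0) ≤ M^(σ - min σ 0)`. -/
theorem sum_range_rpow_le_of_le {σ M : ℝ} (hσ : -1 < σ) {N : ℕ} (hNM : (N : ℝ) ≤ M) :
    ∑ k ∈ range N, ((k : ℝ) + 1) ^ σ ≤ M ^ (σ + 1) / (min σ 0 + 1) := by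
  set a := min σ 0
  have ha1 : 0 < a + 1 := by linarith [lt_min hσ neg_one_lt_zero]
  have hM : 0 ≤ M := (Nat.cast_nonneg N).trans hNM
  have hterm : ∀ k ∈ range N, ((k : ℝ) + 1) ^ σ ≤ M ^ (σ - a) * ((k : ℝ) + 1) ^ a := by
    intro k hk
    have hkM : (k : ℝ) + 1 ≤ M := by
      have := Nat.cast_le (α := ℝ) |>.2 (mem_range.1 hk)
      push_cast at this
      linarith
    rw [← sub_add_cancel σ a, rpow_add (by positivity), add_sub_cancel_right]
    gcongr
    linarith [min_le_left σ 0]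
  calc _ ≤ ∑ k ∈ range N, M ^ (σ - a) * ((k : ℝ) + 1) ^ a := sum_le_sum hterm
    _ ≤ M ^ (σ - a) * (M ^ (a + 1) / (a + 1)) := by
      rw [← mul_sum]
      gcongr
      exact (sum_range_rpow_le (lt_min hσ neg_one_lt_zero) (min_le_right σ 0) N).trans
        (by gcongr)
    _ = M ^ (σ + 1) / (a + 1) := by
      rw [mul_div_assoc', ← rpow_add' hM (by linarith)]
      ring_nf

theorem tsum_rpow_nat_add_le {τ : ℝ} (hτ : τ < -1) {N : ℕ} (hN : 0 < N) :
    ∑' k : ℕ, ((k + N + 1 : ℕ) : ℝ) ^ τ ≤ (N : ℝ) ^ (τ + 1) / (-(τ + 1)) := by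
  have hN0 : (0 : ℝ) < N := Nat.cast_pos.2 hN
  have anti : AntitoneOn (fun x : ℝ => x ^ τ) (Set.Ici (N : ℝ)) := fun x hx y _ hxy =>
    rpow_le_rpow_of_nonpos (hN0.trans_le hx) hxy (by linarith)
  calc _ ≤ ∫ x in Set.Ioi (N : ℝ), x ^ τ :=
        anti.tsum_comp_add_le_integral N (integrableOn_Ioi_rpow_of_lt hτ hN0)
          fun x hx => rpow_nonneg (hN0.trans hx).le τ
    _ = _ := by rw [integral_Ioi_rpow_of_lt hτ hN0, neg_div, div_neg]

theorem summable_nat_add_one_rpow {τ : ℝ} (hτ : τ < -1) :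
    Summable fun k : ℕ => ((k : ℝ) + 1) ^ τ := by
  simpa using (summable_nat_add_iff 1).2 (summable_nat_rpow.2 hτ)

theorem min_rpow_nonneg {x M : ℝ} (hx : 0 ≤ x) (hM : 0 ≤ M) (σ E : ℝ) :
    0 ≤ min (x ^ σ) (M ^ E * x ^ (σ - E)) :=
  le_min (rpow_nonneg hx σ) (mul_nonneg (rpow_nonneg hM E) (rpow_nonneg hx _))

theorem summable_min_rpow {σ E M : ℝ} (hEσ : 1 < E - σ) (hM : 0 ≤ M) :
    Summable fun k : ℕ => min (((k : ℝ) + 1) ^ σ) (M ^ E * ((k : ℝ) + 1) ^ (σ - E)) :=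
  ((summable_nat_add_one_rpow (by linarith)).mul_left _).of_nonneg_of_le
    (fun _ => min_rpow_nonneg (by positivity) hM σ E) fun _ => min_le_right _ _

noncomputable def minRpowSumConst (σ E : ℝ) : ℝ :=
  1 / (min σ 0 + 1) + 2 ^ (E - σ - 1) / (E - σ - 1)

/-- The sum is split at `N = ⌊M⌋₊`, the index where the two entries of the minimum cross. -/
theorem tsum_min_rpow_le {σ E M : ℝ} (hσ : -1 < σ) (hEσ : 1 < E - σ) (hM : 1 ≤ M) :
    ∑' k : ℕ, min (((k : ℝ) + 1) ^ σ) (M ^ E * ((k : ℝ) + 1) ^ (σ - E)) ≤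
      minRpowSumConst σ E * M ^ (σ + 1) := by
  set f : ℕ → ℝ := fun k => min (((k : ℝ) + 1) ^ σ) (M ^ E * ((k : ℝ) + 1) ^ (σ - E))
  have hM0 : 0 < M := by linarith
  set N := ⌊M⌋₊
  have hN : 0 < N := Nat.floor_pos.2 hM
  have hNM : (N : ℝ) ≤ M := Nat.floor_le hM0.le
  have hMN : M / 2 ≤ N := by
    have := Nat.lt_floor_add_one M
    have : (1 : ℝ) ≤ N := by exact_mod_cast hN
    linarith
  have head : ∑ k ∈ range N, f k ≤ M ^ (σ + 1) / (min σ 0 + 1) :=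
    (sum_le_sum fun k _ => min_le_left _ _).trans (sum_range_rpow_le_of_le hσ hNM)
  have tail : ∑' k, f (k + N) ≤ 2 ^ (E - σ - 1) / (E - σ - 1) * M ^ (σ + 1) := by
    have hτ : σ - E < -1 := by linarith
    calc ∑' k, f (k + N) ≤ ∑' k : ℕ, M ^ E * ((k + N + 1 : ℕ) : ℝ) ^ (σ - E) := by
          refine Summable.tsum_le_tsum (fun k => ?_)
            ((summable_nat_add_iff N).2 (summable_min_rpow hEσ hM0.le)) ?_
          · simp [f]
          · exact ((summable_nat_add_iff (N + 1)).2 (summable_nat_rpow.2 hτ)).mul_left _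
      _ ≤ M ^ E * ((M / 2) ^ (σ - E + 1) / (-(σ - E + 1))) := by
          rw [tsum_mul_left]
          gcongr
          exact (tsum_rpow_nat_add_le hτ hN).trans <| div_le_div_of_nonneg_right
            (rpow_le_rpow_of_nonpos (by positivity) hMN (by linarith)) (by linarith)
      _ = 2 ^ (E - σ - 1) / (E - σ - 1) * M ^ (σ + 1) := by
          have : M ^ E * M ^ (σ - E + 1) = M ^ (σ + 1) := by rw [← rpow_add hM0]; ring_nf
          rw [div_rpow hM0.le (by norm_num), show E - σ - 1 = -(σ - E + 1) by ring,
            rpow_neg (by norm_num), ← this]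
          field_simp
  rw [← (summable_min_rpow hEσ hM0.le).sum_add_tsum_nat_add N, minRpowSumConst, add_mul,
    one_div_mul_eq_div]
  exact add_le_add head tail

theorem tsum_min_rpow_comp_le {σ E M : ℝ} (hσ : -1 < σ) (hEσ : 1 < E - σ) (hM : 1 ≤ M)
    {u : ℕ → ℕ} (hu : Function.Injective u) :
    ∑' k, min (((u k : ℝ) + 1) ^ σ) (M ^ E * ((u k : ℝ) + 1) ^ (σ - E)) ≤
      minRpowSumConst σ E * M ^ (σ + 1) :=
  (tsum_comp_le_tsum_of_inj (summable_min_rpow hEσ (by linarith))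
    (fun _ => min_rpow_nonneg (by positivity) (by linarith) σ E) hu).trans
    (tsum_min_rpow_le hσ hEσ hM)

theorem rpow_mul_rpow_le_mul_min {lam m b M E σ : ℝ} (hlam : 0 ≤ lam) (hm : 0 < m) (hM : 0 ≤ M)
    (hE : 0 ≤ E) (hb : lam ≤ b) (hbM : m * lam ≤ b * M) :
    lam ^ E * m ^ σ ≤ b ^ E * min (m ^ σ) (M ^ E * m ^ (σ - E)) := by
  rw [mul_min_of_nonneg _ _ (rpow_nonneg (hlam.trans hb) E)]
  refine le_min (by gcongr) ?_
  calc lam ^ E * m ^ σ = (m * lam) ^ E * m ^ (σ - E) := by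
        rw [mul_rpow hm.le hlam, rpow_sub hm]; field_simp
    _ ≤ (b * M) ^ E * m ^ (σ - E) := by gcongr
    _ = b ^ E * (M ^ E * m ^ (σ - E)) := by rw [mul_rpow (hlam.trans hb) hM]; ring

theorem le_of_rpow_add_rpow_eq {m lam μ α β γ : ℝ} (hm : 0 < m) (hlam : 0 < lam) (hμ : 0 < μ)
    (hα : 0 < α) (hβ : 0 < β) (hγ : γ ≠ 0)
    (h : (m * lam) ^ α + lam ^ (2 * β) = μ ^ (1 / γ)) :
    lam ≤ μ ^ (1 / (2 * β * γ)) ∧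
      m * lam ≤ μ ^ (1 / (2 * β * γ)) * μ ^ ((1 / α - 1 / (2 * β)) / γ) := by
  have root : ∀ {x a : ℝ}, 0 ≤ x → 0 < a → x ^ a ≤ μ ^ (1 / γ) → x ≤ μ ^ (1 / (a * γ)) := by
    intro x a hx ha hle
    rw [show 1 / (a * γ) = 1 / γ * a⁻¹ by field_simp, rpow_mul hμ.le]
    exact (le_rpow_inv_iff_of_pos hx (by positivity) ha).2 hle
  have hmα := rpow_nonneg (mul_pos hm hlam).le α
  have hlβ := rpow_nonneg hlam.le (2 * β)
  refine ⟨root hlam.le (by positivity) (by linarith), ?_⟩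
  rw [← rpow_add hμ, show 1 / (2 * β * γ) + (1 / α - 1 / (2 * β)) / γ = 1 / (α * γ) by
    field_simp; ring]
  exact root (mul_pos hm hlam).le hα (by linarith)

theorem inv_mul_rpow_mul_rpow {μ : ℝ} (hμ : 0 < μ) (x y E F : ℝ) :
    μ⁻¹ * (μ ^ x) ^ E * (μ ^ y) ^ F = μ ^ (x * E + y * F - 1) := by
  rw [← rpow_mul hμ.le, ← rpow_mul hμ.le, ← rpow_neg_one, ← rpow_add hμ, ← rpow_add hμ]
  ring_nf

def IsLevelSequence (n : ℕ) (α β γ μ : ℝ) (muk : ℕ → ℝ) : Prop :=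
  ∀ k : ℕ, 0 < muk k ∧ ((2 * (k : ℝ) + n) * muk k) ^ α + (muk k) ^ (2 * β) = μ ^ (1 / γ)

section LevelSequence

variable {n : ℕ} {α β γ E σ μ : ℝ} {muk : ℕ → ℝ}

theorem term_le_mul_min (hn : 1 ≤ n) (hα : 0 < α) (hβ : 0 < β) (hγ : γ ≠ 0) (hμ : 0 < μ)
    (hE : 0 ≤ E)
    (hmuk : IsLevelSequence n α β γ μ muk) (k : ℕ) :
    μ⁻¹ * muk k ^ E * (2 * (k : ℝ) + n) ^ σ ≤ μ⁻¹ * (μ ^ (1 / (2 * β * γ))) ^ E *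
      min ((2 * (k : ℝ) + n) ^ σ)
        ((μ ^ ((1 / α - 1 / (2 * β)) / γ)) ^ E * (2 * (k : ℝ) + n) ^ (σ - E)) := by
  have hm : (0 : ℝ) < 2 * k + n := by positivity
  obtain ⟨hb, hbM⟩ := le_of_rpow_add_rpow_eq hm (hmuk k).1 hμ hα hβ hγ (hmuk k).2
  rw [mul_assoc, mul_assoc]
  exact mul_le_mul_of_nonneg_left
    (rpow_mul_rpow_le_mul_min (hmuk k).1.le hm (by positivity) hE hb hbM) (inv_nonneg.2 hμ.le)

theorem term_le_rpow_mul (hn : 1 ≤ n) (hα : 0 < α) (hβ : 0 < β) (hγ : γ ≠ 0) (hμ : 0 < μ)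
    (hσ : -1 < σ) (hEσ : 1 < E - σ)
    (hmuk : IsLevelSequence n α β γ μ muk) (k : ℕ) :
    μ⁻¹ * muk k ^ E * (2 * (k : ℝ) + n) ^ σ ≤ μ ^ (E / (α * γ) - 1) * ((k : ℝ) + 1) ^ (σ - E) := by
  set b := μ ^ (1 / (2 * β * γ))
  set M := μ ^ ((1 / α - 1 / (2 * β)) / γ)
  have hcoef : 0 ≤ μ⁻¹ * b ^ E := mul_nonneg (inv_nonneg.2 hμ.le) (rpow_nonneg (by positivity) E)
  have hk : (k : ℝ) + 1 ≤ 2 * k + n := by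
    have : (1 : ℝ) ≤ n := by exact_mod_cast hn
    linarith [(Nat.cast_nonneg k : (0 : ℝ) ≤ k)]
  calc _ ≤ μ⁻¹ * b ^ E * (M ^ E * (2 * (k : ℝ) + n) ^ (σ - E)) :=
        (term_le_mul_min hn hα hβ hγ hμ (by linarith) hmuk k).trans
          (mul_le_mul_of_nonneg_left (min_le_right _ _) hcoef)
    _ ≤ μ⁻¹ * b ^ E * (M ^ E * ((k : ℝ) + 1) ^ (σ - E)) := by
        refine mul_le_mul_of_nonneg_left (mul_le_mul_of_nonneg_left ?_ (by positivity)) hcoef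
        exact rpow_le_rpow_of_nonpos (by positivity) hk (by linarith)
    _ = _ := by
        rw [← mul_assoc, inv_mul_rpow_mul_rpow hμ]
        congr 2
        field_simp
        ring

theorem summable_term (hn : 1 ≤ n) (hα : 0 < α) (hβ : 0 < β) (hγ : γ ≠ 0) (hμ : 0 < μ)
    (hσ : -1 < σ) (hEσ : 1 < E - σ)
    (hmuk : IsLevelSequence n α β γ μ muk) :
    Summable fun k : ℕ => μ⁻¹ * muk k ^ E * (2 * (k : ℝ) + n) ^ σ :=
  ((summable_nat_add_one_rpow (by linarith)).mul_left _).of_nonneg_of_le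
    (fun k => by have := (hmuk k).1; positivity) (term_le_rpow_mul hn hα hβ hγ hμ hσ hEσ hmuk)

theorem tsum_term_le_tsum_mul_rpow (hn : 1 ≤ n) (hα : 0 < α) (hβ : 0 < β) (hγ : γ ≠ 0)
    (hμ : 0 < μ) (hσ : -1 < σ) (hEσ : 1 < E - σ)
    (hmuk : IsLevelSequence n α β γ μ muk) :
    ∑' k : ℕ, μ⁻¹ * muk k ^ E * (2 * (k : ℝ) + n) ^ σ ≤
      (∑' k : ℕ, ((k : ℝ) + 1) ^ (σ - E)) * μ ^ (E / (α * γ) - 1) := by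
  rw [mul_comm, ← tsum_mul_left]
  exact Summable.tsum_le_tsum (term_le_rpow_mul hn hα hβ hγ hμ hσ hEσ hmuk)
    (summable_term hn hα hβ hγ hμ hσ hEσ hmuk)
    ((summable_nat_add_one_rpow (by linarith)).mul_left _)

theorem tsum_term_le_const_mul_rpow_of_one_le (hn : 1 ≤ n) (hα : 0 < α) (hβ : 0 < β) (hγ : γ ≠ 0)
    (hμ : 0 < μ) (hσ : -1 < σ) (hEσ : 1 < E - σ) (hM : 1 ≤ μ ^ ((1 / α - 1 / (2 * β)) / γ))
    (hmuk : IsLevelSequence n α β γ μ muk) :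
    ∑' k : ℕ, μ⁻¹ * muk k ^ E * (2 * (k : ℝ) + n) ^ σ ≤ minRpowSumConst σ E *
      μ ^ (E / (2 * β * γ) + (1 / γ) * (1 / α - 1 / (2 * β)) * (σ + 1) - 1) := by
  set b := μ ^ (1 / (2 * β * γ))
  set M := μ ^ ((1 / α - 1 / (2 * β)) / γ)
  set u : ℕ → ℕ := fun k => 2 * k + (n - 1)
  have hu : Function.Injective u := fun i j h => by simp only [u] at h; omega
  have hux : ∀ k, (u k : ℝ) + 1 = 2 * k + n := fun k => by
    simp only [u]; push_cast [Nat.cast_sub hn]; ring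
  have hmin := tsum_min_rpow_comp_le hσ hEσ hM hu
  have hsum := (summable_min_rpow hEσ (rpow_nonneg hμ.le _ : 0 ≤ M)).comp_injective hu
  simp only [Function.comp_def, hux] at hmin hsum
  calc _ ≤ ∑' k : ℕ, μ⁻¹ * b ^ E *
          min ((2 * (k : ℝ) + n) ^ σ) (M ^ E * (2 * (k : ℝ) + n) ^ (σ - E)) :=
        Summable.tsum_le_tsum (term_le_mul_min hn hα hβ hγ hμ (by linarith) hmuk)
          (summable_term hn hα hβ hγ hμ hσ hEσ hmuk) (hsum.mul_left _)
    _ ≤ μ⁻¹ * b ^ E * (minRpowSumConst σ E * M ^ (σ + 1)) := by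
        rw [tsum_mul_left]
        gcongr
    _ = _ := by
        rw [mul_left_comm, inv_mul_rpow_mul_rpow hμ]
        congr 2
        ring

theorem series_bound_of_exponents (n : ℕ) (hn : 1 ≤ n) {α β γ E σ : ℝ} (hα : 0 < α)
    (hβ : 0 < β) (hγ : γ ≠ 0) (hσ : -1 < σ) (hEσ : 1 < E - σ) :
    ∃ C : ℝ, ∀ μ : ℝ, 0 < μ → ∀ muk : ℕ → ℝ, IsLevelSequence n α β γ μ muk →
      (μ ^ ((1 / α - 1 / (2 * β)) / γ) ≤ 1 →
          ∑' k : ℕ, μ⁻¹ * (muk k) ^ E * (2 * (k : ℝ) + n) ^ σ ≤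
            C * μ ^ (E / (α * γ) - 1)) ∧
       (1 < μ ^ ((1 / α - 1 / (2 * β)) / γ) →
          ∑' k : ℕ, μ⁻¹ * (muk k) ^ E * (2 * (k : ℝ) + n) ^ σ ≤
            C * μ ^ (E / (2 * β * γ) + (1 / γ) * (1 / α - 1 / (2 * β)) * (σ + 1) - 1)) := by
  refine ⟨max (∑' k : ℕ, ((k : ℝ) + 1) ^ (σ - E)) (minRpowSumConst σ E),
    fun μ hμ muk hmuk => ⟨fun _ => ?_, fun hM => ?_⟩⟩
  · exact (tsum_term_le_tsum_mul_rpow hn hα hβ hγ hμ hσ hEσ hmuk).trans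
      (mul_le_mul_of_nonneg_right (le_max_left _ _) (rpow_nonneg hμ.le _))
  · exact (tsum_term_le_const_mul_rpow_of_one_le hn hα hβ hγ hμ hσ hEσ hM.le hmuk).trans
      (mul_le_mul_of_nonneg_right (le_max_right _ _) (rpow_nonneg hμ.le _))

end LevelSequence

theorem series_bound_homogeneous (n d : ℕ) (hn : 1 ≤ n) (hd : 1 ≤ d)
    (α β γ : ℝ) (hα : 0 < α) (hβ : 0 < β) (hγ : γ ≠ 0)
    (p r : ℝ) (q : ℝ≥0∞)
    (hp1 : 1 ≤ p) (hp2 : p ≤ 2) (hq : 2 ≤ q)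
    (hr1 : 1 ≤ r) (hr2 : r ≤ 2 * (d + 1) / (d + 3))
    (hne : ¬(d = 1 ∧ p = 2 ∧ q = 2)) :
    ∃ C : ℝ, ∀ μ : ℝ, 0 < μ → ∀ muk : ℕ → ℝ,
      (∀ k : ℕ, 0 < muk k ∧
        ((2 * (k : ℝ) + n) * muk k) ^ α + (muk k) ^ (2 * β) = μ ^ (1 / γ)) →
      (let E : ℝ := n * (1 / p - (q⁻¹).toReal) + d * (1 / r - (1 - 1 / r))
       let σ : ℝ := phiKR n (1 / p - 1 / 2) + phiKR n (1 / 2 - (q⁻¹).toReal)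
       (μ ^ ((1 / α - 1 / (2 * β)) / γ) ≤ 1 →
          ∑' k : ℕ, μ⁻¹ * (muk k) ^ E * (2 * (k : ℝ) + n) ^ σ ≤
            C * μ ^ (E / (α * γ) - 1)) ∧
       (1 < μ ^ ((1 / α - 1 / (2 * β)) / γ) →
          ∑' k : ℕ, μ⁻¹ * (muk k) ^ E * (2 * (k : ℝ) + n) ^ σ ≤
            C * μ ^ (E / (2 * β * γ) + (1 / γ) * (1 / α - 1 / (2 * β)) * (σ + 1) - 1))) := by
  obtain ⟨hσ, hEσ⟩ := exponent_bounds (n := n) hd hp1 hp2 hq hr1 hr2 hne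
  exact series_bound_of_exponents n hn hα hβ hγ hσ hEσ
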